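/- In the ranking protocol, at most 2 divisions can achieve the minimal value of the worse ranking: the set of divisions d minimizing max(r_A(d), r_B(d)) has cardinality at most 2, when r_A and r_B are bijective rankings onto {1,...,n}. -/
import Mathlib


/-- In the ranking protocol, at most two divisions achieve the minimal
value of the worse (larger) of the two ranks. -/
theorem ranking_protocol_at_most_two_minimizers
    (n : ℕ) (D : Type) [Fintype D] [DecidableEq D]
    (rA rB : D ≃ Fin n) :
    (Finset.univ.filter (fun d : D =>
        ∀ e : D, max ((rA d : ℕ)) ((rB d : ℕ)) ≤ max ((rA e : ℕ)) ((rB e : ℕ)))).card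
      ≤ 2 := by
  by_contra h
  push_neg at h
  obtain ⟨a, b, c, ha, hb, hc, hab, hac, hbc⟩ := Finset.two_lt_card_iff.mp h
  simp only [Finset.mem_filter, Finset.mem_univ, true_and] at ha hb hc
  have hinjA : ∀ x y : D, (rA x : ℕ) = (rA y : ℕ) → x = y := by
    intro x y hxy
    exact rA.injective (Fin.ext hxy)
  have hinjB : ∀ x y : D, (rB x : ℕ) = (rB y : ℕ) → x = y := by
    intro x y hxy
    exact rB.injective (Fin.ext hxy)
  set m := max ((rA a : ℕ)) ((rB a : ℕ)) with hm
  have hbm : max ((rB b : ℕ)) ((rA b : ℕ)) = m := by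
    rw [max_comm]; exact le_antisymm (hb a) (ha b)
  have hcm : max ((rB c : ℕ)) ((rA c : ℕ)) = m := by
    rw [max_comm]; exact le_antisymm (hc a) (ha c)
  have ea : (rA a : ℕ) = m ∨ (rB a : ℕ) = m := by
    rcases max_choice ((rA a : ℕ)) ((rB a : ℕ)) with h1 | h1
    · left; rw [hm, h1]
    · right; rw [hm, h1]
  have eb : (rA b : ℕ) = m ∨ (rB b : ℕ) = m := by
    rcases max_choice ((rB b : ℕ)) ((rA b : ℕ)) with h1 | h1
    · right; rw [← hbm, h1]
    · left; rw [← hbm, h1]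
  have ec : (rA c : ℕ) = m ∨ (rB c : ℕ) = m := by
    rcases max_choice ((rB c : ℕ)) ((rA c : ℕ)) with h1 | h1
    · right; rw [← hcm, h1]
    · left; rw [← hcm, h1]
  rcases ea with ha' | ha' <;> rcases eb with hb' | hb' <;> rcases ec with hc' | hc'
  · exact hab (hinjA a b (ha'.trans hb'.symm))
  · exact hab (hinjA a b (ha'.trans hb'.symm))
  · exact hac (hinjA a c (ha'.trans hc'.symm))
  · exact hbc (hinjB b c (hb'.trans hc'.symm))
  · exact hbc (hinjA b c (hb'.trans hc'.symm))
  · exact hac (hinjB a c (ha'.trans hc'.symm))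
  · exact hab (hinjB a b (ha'.trans hb'.symm))
  · exact hab (hinjB a b (ha'.trans hb'.symm))
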